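/- arXiv:1812.09626 — 2 statements merged into one kernel-verified Lean document; each statement's English description precedes it below -/
import Mathlib

section
/- Let f : ℝ₊² → ℝ₊ satisfy hypotheses (H1)-(H2): f is increasing in each argument, and ϕ(s,i) = f(s,i)/i is decreasing in i for fixed s. Then for all s, i*, j > 0, the inequality (j/i*)·(f(s,i*)/f(s,j)) - 1 - j/i* + f(s,j)/f(s,i*) ≤ 0 holds, where j denotes i(t-τ). -/
theorem endemic_central_inequality (f : ℝ → ℝ → ℝ)
    (hf_pos : ∀ s i, 0 < s → 0 < i → 0 < f s i)
    (hH1s : ∀ i, 0 < i → MonotoneOn (fun s => f s i) (Set.Ici 0))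
    (hH1i : ∀ s, 0 ≤ s → MonotoneOn (fun i => f s i) (Set.Ioi 0))
    (hH2 : ∀ s, 0 ≤ s → AntitoneOn (fun i => f s i / i) (Set.Ioi 0)) :
    ∀ s istar j, 0 < s → 0 < istar → 0 < j →
      (j / istar) * (f s istar / f s j) - 1 - j / istar +
        f s j / f s istar ≤ 0 := by
  intro s istar j hs hi hj
  have ha := hf_pos s istar hs hi
  have hb := hf_pos s j hs hj
  have key : (j * f s istar - istar * f s j) * (f s istar - f s j) ≤ 0 := by
    rcases le_total j istar with h | h
    · have h1 : f s j ≤ f s istar :=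
        hH1i s hs.le (Set.mem_Ioi.mpr hj) (Set.mem_Ioi.mpr hi) h
      have h2 : f s istar / istar ≤ f s j / j :=
        hH2 s hs.le (Set.mem_Ioi.mpr hj) (Set.mem_Ioi.mpr hi) h
      have h3 : f s istar * j ≤ f s j * istar := (div_le_div_iff₀ hi hj).mp h2
      nlinarith
    · have h1 : f s istar ≤ f s j :=
        hH1i s hs.le (Set.mem_Ioi.mpr hi) (Set.mem_Ioi.mpr hj) h
      have h2 : f s j / j ≤ f s istar / istar :=
        hH2 s hs.le (Set.mem_Ioi.mpr hi) (Set.mem_Ioi.mpr hj) h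
      have h3 : f s j * istar ≤ f s istar * j := (div_le_div_iff₀ hj hi).mp h2
      nlinarith
  have heq : (j / istar) * (f s istar / f s j) - 1 - j / istar + f s j / f s istar
      = ((j * f s istar - istar * f s j) * (f s istar - f s j)) /
        (istar * f s j * f s istar) := by
    field_simp
    ring
  rw [heq]
  exact div_nonpos_of_nonpos_of_nonneg key (by positivity)
end

section
/- Let i : ℝ → (0,∞) be continuous, i* > 0, g : [0,h] → ℝ₊ continuous, and G(x) = x - 1 - ln x. Define V₂(t) = ∫₀ʰ g(τ)·(∫₀^τ G(i(t-u)/i*)du)dτ. Then V₂ is differentiable with V₂'(t) = ∫₀ʰ g(τ)·(i(t)/i* - i(t-τ)/i* + ln(i(t-τ)/i(t)))dτ. -/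
/-!
Writing `Φ` for a primitive of the continuous function `F = G(i(·)/i*)`, the inner integral
`∫₀^τ F(t - u) du` equals `Φ t - Φ (t - τ)`, whose `t`-derivative is `F t - F (t - τ)`. This is
bounded uniformly for `t` near `t₀` and `τ ∈ [0, h]`, so differentiation under the outer integral
is justified by dominated convergence; finally `F t - F (t - τ)` simplifies through `log_div`.
-/

open MeasureTheory intervalIntegral Set

theorem Continuous.hasDerivAt_integral_comp_sub {F : ℝ → ℝ} (hF : Continuous F) (τ x : ℝ) :
    HasDerivAt (fun x => ∫ u in (0:ℝ)..τ, F (x - u)) (F x - F (x - τ)) x := by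
  set Φ : ℝ → ℝ := fun y => ∫ v in (0:ℝ)..y, F v
  have hΦ : ∀ y, HasDerivAt Φ (F y) y := fun y =>
    (hF.integral_hasStrictDerivAt 0 y).hasDerivAt
  have h_eq : (fun x => ∫ u in (0:ℝ)..τ, F (x - u)) = fun x => Φ x - Φ (x - τ) := by
    funext x
    rw [integral_comp_sub_left F x, sub_zero, ← integral_interval_sub_left
      (hF.intervalIntegrable 0 x) (hF.intervalIntegrable 0 (x - τ))]
  rw [h_eq]
  exact (hΦ x).sub ((hΦ (x - τ)).comp_sub_const x τ)

theorem hasDerivAt_integral_mul_integral_comp_sub {F g : ℝ → ℝ} {h : ℝ} (hF : Continuous F)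
    (hg : IntervalIntegrable g volume 0 h) (t : ℝ) :
    HasDerivAt (fun x => ∫ τ in (0:ℝ)..h, g τ * ∫ u in (0:ℝ)..τ, F (x - u))
      (∫ τ in (0:ℝ)..h, g τ * (F t - F (t - τ))) t := by
  obtain ⟨C, hC⟩ :=
    (isCompact_closedBall t (|h| + 1)).exists_bound_of_continuousOn hF.continuousOn
  have h_inner_cont : ∀ x, Continuous fun τ => ∫ u in (0:ℝ)..τ, F (x - u) := fun x =>
    continuous_primitive (fun _ _ => (hF.comp (continuous_sub_left x)).intervalIntegrable _ _) 0
  have h_deriv_cont : ∀ x, Continuous fun τ => F x - F (x - τ) := fun x =>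
    continuous_const.sub (hF.comp (continuous_sub_left x))
  have h_bound : ∀ τ ∈ uIoc (0:ℝ) h, ∀ x ∈ Metric.ball t 1,
      ‖g τ * (F x - F (x - τ))‖ ≤ |g τ| * (C + C) := by
    intro τ hτ x hx
    have hτ_abs : |τ| ≤ |h| := by
      simpa only [sub_zero] using abs_sub_left_of_mem_uIcc (uIoc_subset_uIcc hτ)
    rw [Metric.mem_ball, Real.dist_eq] at hx
    have hx_mem : x ∈ Metric.closedBall t (|h| + 1) := by
      rw [Metric.mem_closedBall, Real.dist_eq]; linarith [abs_nonneg h]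
    have hxτ_mem : x - τ ∈ Metric.closedBall t (|h| + 1) := by
      rw [Metric.mem_closedBall, Real.dist_eq, show x - τ - t = (x - t) - τ by ring]
      linarith [abs_sub (x - t) τ]
    rw [norm_mul, Real.norm_eq_abs]
    gcongr
    exact (abs_sub _ _).trans (add_le_add (hC _ hx_mem) (hC _ hxτ_mem))
  exact (hasDerivAt_integral_of_dominated_loc_of_deriv_le (Metric.ball_mem_nhds t one_pos)
    (Filter.Eventually.of_forall fun x =>
      (hg.mul_continuousOn (h_inner_cont x).continuousOn).def'.aestronglyMeasurable)
    (hg.mul_continuousOn (h_inner_cont t).continuousOn)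
    (hg.mul_continuousOn (h_deriv_cont t).continuousOn).def'.aestronglyMeasurable
    (Filter.Eventually.of_forall h_bound) (hg.abs.mul_const _)
    (Filter.Eventually.of_forall fun τ _ x _ =>
      (hF.hasDerivAt_integral_comp_sub τ x).const_mul (g τ))).2

theorem sub_one_sub_log_div_sub {a b c : ℝ} (ha : a ≠ 0) (hb : b ≠ 0) (hc : c ≠ 0) :
    (a / c - 1 - Real.log (a / c)) - (b / c - 1 - Real.log (b / c))
      = a / c - b / c + Real.log (b / a) := by
  rw [Real.log_div ha hc, Real.log_div hb hc, Real.log_div hb ha]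
  ring

theorem lyapunov_V2_deriv_general (h istar : ℝ) (hh : 0 ≤ h) (histar : 0 < istar)
    (i g : ℝ → ℝ) (hi : Continuous i) (hi_pos : ∀ t, 0 < i t)
    (hg : ContinuousOn g (Set.Icc 0 h)) :
    ∀ t : ℝ,
      HasDerivAt
        (fun t => ∫ τ in (0:ℝ)..h, g τ *
          ∫ u in (0:ℝ)..τ, (i (t - u) / istar - 1 - Real.log (i (t - u) / istar)))
        (∫ τ in (0:ℝ)..h, g τ *
          (i t / istar - i (t - τ) / istar + Real.log (i (t - τ) / i t))) t := by
  intro t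
  have hF : Continuous fun s => i s / istar - 1 - Real.log (i s / istar) :=
    ((hi.div_const istar).sub continuous_const).sub
      ((hi.div_const istar).log fun s => (div_pos (hi_pos s) histar).ne')
  refine (hasDerivAt_integral_mul_integral_comp_sub hF (hg.intervalIntegrable_of_Icc hh) t).congr_deriv
    (integral_congr fun τ _ => ?_)
  rw [sub_one_sub_log_div_sub (hi_pos t).ne' (hi_pos (t - τ)).ne' histar.ne']

theorem lyapunov_V2_deriv (h istar : ℝ) (hh : 0 ≤ h) (histar : 0 < istar)
    (i g : ℝ → ℝ) (hi : Continuous i) (hi_pos : ∀ t, 0 < i t)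
    (hg : ContinuousOn g (Set.Icc 0 h))
    (hg_nonneg : ∀ τ ∈ Set.Icc 0 h, 0 ≤ g τ) :
    ∀ t : ℝ,
      HasDerivAt
        (fun t => ∫ τ in (0:ℝ)..h, g τ *
          ∫ u in (0:ℝ)..τ, (i (t - u) / istar - 1 - Real.log (i (t - u) / istar)))
        (∫ τ in (0:ℝ)..h, g τ *
          (i t / istar - i (t - τ) / istar + Real.log (i (t - τ) / i t))) t :=
  lyapunov_V2_deriv_general h istar hh histar i g hi hi_pos hg
end
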